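/- Let H = (U ∪ {s}, F) be a finite connected multigraph without loop-edges with sink s, let w ∈ U, and let H' be H with one extra edge joining w to s. For η* ∈ R_{H'} \ R_H (such η* satisfy η*(w) = deg_H(w)), let W(η*) denote the set of vertices that topple in the wave started from η*: topple w once and carry out in H all topplings possible without toppling w a second time. Call η* a last wave if there exists a neighbour y of w in U ∪ {s} with y ∉ W(η*). Then (1/deg_H(w)) · |R_H| ≤ |{η* ∈ R_{H'} \ R_H : η* is a last wave}| ≤ |R_H|. -/

import Mathlib

/-!
`R_{H'} \ R_H` consists of the allowed configurations (no forbidden subconfiguration) that are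
stable in `H` except for exactly `deg_H w` grains on `w`; this rests on Dhar's criterion that
allowed stable configurations are recurrent. A wave from such an `η` topples every vertex at most
once and ends stable in `H` exactly when it misses a neighbour of `w`, in which case its result
lies in `R_H`; since the result of a wave determines `η`, this gives the upper bound.

For the lower bound, put `deg_H w` grains on `w` in `ζ ∈ R_H` and run waves until the first last
wave. A wave reaching every neighbour of `w`, followed by lowering `w`, never yields an allowed
configuration, so this chain of waves can be traced back uniquely: the last wave together with
`ζ w < deg_H w` determines `ζ`.
-/

/-- A finite connected multigraph without loop-edges, with a distinguished sink vertex.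
`mult x y` is the number of edges joining `x` and `y`. -/
structure SandpileGraph (V : Type*) [Fintype V] [DecidableEq V] where
  sink : V
  mult : V → V → ℕ
  symm : ∀ x y, mult x y = mult y x
  loopless : ∀ x, mult x x = 0
  conn : ∀ x : V, Relation.ReflTransGen (fun a b => 0 < mult a b) x sink

namespace SandpileGraph

variable {V : Type*} [Fintype V] [DecidableEq V]

/-- The degree of a vertex. -/
def deg (H : SandpileGraph V) (x : V) : ℕ := ∑ y, H.mult x y

/-- Toppling of the vertex `x`: `x` sends one grain along each incident edge;
grains reaching the sink are lost. -/
def topple (H : SandpileGraph V) (x : V) (η : V → ℕ) : V → ℕ :=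
  fun y => if y = x then η y - H.deg x else if y = H.sink then η y else η y + H.mult x y

/-- Legality of a finite sequence of topplings. -/
def LegalSeq (H : SandpileGraph V) : (V → ℕ) → List V → Prop
  | _, [] => True
  | η, x :: l => x ≠ H.sink ∧ H.deg x ≤ η x ∧ H.LegalSeq (H.topple x η) l

/-- The result of performing a sequence of topplings. -/
def toppleList (H : SandpileGraph V) : (V → ℕ) → List V → (V → ℕ)
  | η, [] => η
  | η, x :: l => H.toppleList (H.topple x η) l

/-- A configuration is stable if every non-sink vertex has fewer grains than its degree. -/
def Stable (H : SandpileGraph V) (η : V → ℕ) : Prop :=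
  ∀ x, x ≠ H.sink → η x < H.deg x

/-- Recurrent configurations of the sandpile Markov chain: stable configurations (vanishing
at the sink) reachable from any configuration by adding grains at non-sink vertices and
stabilizing. -/
def Recurrent (H : SandpileGraph V) (η : V → ℕ) : Prop :=
  η H.sink = 0 ∧ H.Stable η ∧
    ∀ ξ : V → ℕ, ξ H.sink = 0 →
      ∃ m : V → ℕ, m H.sink = 0 ∧
        ∃ l : List V, H.LegalSeq (ξ + m) l ∧ H.toppleList (ξ + m) l = η ∧
          H.Stable (H.toppleList (ξ + m) l)

/-- A wave started at `w` from the configuration `η` (with `η` unstable at `w` in `H`):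
`w` is toppled once, and then all topplings in `H` are carried out that are possible
without toppling `w` a second time; each vertex topples at most once.  The list `l` records
the toppled vertices in a legal order; the wave `W(η)` is the set of entries of `l`. -/
def IsWaveList (H : SandpileGraph V) (w : V) (η : V → ℕ) (l : List V) : Prop :=
  l.Nodup ∧ w ∈ l ∧ H.LegalSeq η l ∧
    ∀ v, v ≠ H.sink → v ≠ w → H.toppleList η l v < H.deg v

/-- `η` is a last wave: some neighbour `y` of `w` in `H` (in `U ∪ {s}`) does not belong
to the wave `W(η)` started at `w` from `η`. -/
def IsLastWaveCfg (H : SandpileGraph V) (w : V) (η : V → ℕ) : Prop :=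
  ∃ l : List V, H.IsWaveList w η l ∧ ∃ y : V, 0 < H.mult w y ∧ y ∉ l

end SandpileGraph

theorem exists_of_extend_of_length_le {α : Type*} {P Q : List α → Prop} (N : ℕ)
    (hbound : ∀ l, P l → l.length ≤ N) (hext : ∀ l, P l → ¬ Q l → ∃ a, P (l ++ [a]))
    {l : List α} (hl : P l) : ∃ l, P l ∧ Q l := by
  suffices ∀ k l, N < l.length + k → P l → ∃ l, P l ∧ Q l from this (N + 1) l (by omega) hl
  intro k
  induction k with
  | zero => exact fun l hN hl => absurd (hbound l hl) (by omega)
  | succ k ih =>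
    intro l hN hl
    by_cases hq : Q l
    · exact ⟨l, hl, hq⟩
    · obtain ⟨a, ha⟩ := hext l hl hq
      exact ih _ (by simp only [List.length_append, List.length_singleton]; omega) ha

namespace Set.InjOn

variable {α : Type*} {f : α → α} {D : Set α}

lemma eq_of_iterate_eq (hf : InjOn f D) {x y : α} (hx : x ∉ f '' D) (hy : y ∉ f '' D)
    {m n : ℕ} (hxm : ∀ k < m, f^[k] x ∈ D) (hyn : ∀ k < n, f^[k] y ∈ D)
    (h : f^[m] x = f^[n] y) : x = y ∧ m = n := by
  induction m generalizing n with
  | zero =>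
    cases n with
    | zero => exact ⟨h, rfl⟩
    | succ n =>
      rw [Function.iterate_succ_apply'] at h
      exact absurd ⟨_, hyn n n.lt_succ_self, h.symm⟩ hx
  | succ m ih =>
    cases n with
    | zero =>
      rw [Function.iterate_succ_apply'] at h
      exact absurd ⟨_, hxm m m.lt_succ_self, h⟩ hy
    | succ n =>
      rw [Function.iterate_succ_apply', Function.iterate_succ_apply'] at h
      obtain ⟨hxy, rfl⟩ := ih (fun k hk => hxm k (hk.trans m.lt_succ_self))
        (fun k hk => hyn k (hk.trans n.lt_succ_self))
        (hf (hxm m m.lt_succ_self) (hyn n n.lt_succ_self) h)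
      exact ⟨hxy, rfl⟩

lemma exists_iterate_notMem (hf : InjOn f D) (hD : D.Finite) {x : α} (hx : x ∉ f '' D) :
    ∃ k, (∀ j < k, f^[j] x ∈ D) ∧ f^[k] x ∉ D := by
  have hexit : ∃ k, f^[k] x ∉ D := by
    by_contra! hall
    obtain ⟨i, j, hij, heq⟩ := hD.exists_lt_map_eq_of_forall_mem hall
    exact hij.ne (hf.eq_of_iterate_eq hx hx (fun k _ => hall k) (fun k _ => hall k) heq).2
  classical
  exact ⟨Nat.find hexit, fun j hj => not_not.1 (Nat.find_min hexit hj), Nat.find_spec hexit⟩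

end Set.InjOn

namespace SandpileGraph

open Finset

variable {V : Type*} [Fintype V] [DecidableEq V] (H : SandpileGraph V)

/-! ### Toppling and the Laplacian -/

lemma deg_eq_sum_mult_left (x : V) : H.deg x = ∑ u, H.mult u x :=
  sum_congr rfl fun u _ => H.symm x u

lemma sum_mult_le_deg (S : Finset V) (x : V) : ∑ u ∈ S, H.mult u x ≤ H.deg x :=
  H.deg_eq_sum_mult_left x ▸ sum_le_sum_of_subset (subset_univ S)

lemma sum_erase_mult (S : Finset V) (x : V) :
    ∑ u ∈ S.erase x, H.mult u x = ∑ u ∈ S, H.mult u x :=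
  sum_erase S (H.loopless x)

lemma sum_mult_lt_deg_iff (S : Finset V) (x : V) :
    ∑ u ∈ S, H.mult u x < H.deg x ↔ ∃ y ∉ S, 0 < H.mult x y := by
  rw [H.deg_eq_sum_mult_left, ← sum_compl_add_sum S, lt_add_iff_pos_left,
    sum_pos_iff]
  simp [H.symm x]

lemma toppleList_append (η : V → ℕ) (l₁ l₂ : List V) :
    H.toppleList η (l₁ ++ l₂) = H.toppleList (H.toppleList η l₁) l₂ := by
  induction l₁ generalizing η with
  | nil => rfl
  | cons v t ih => exact ih _

lemma legalSeq_append {η : V → ℕ} {l₁ l₂ : List V} :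
    H.LegalSeq η (l₁ ++ l₂) ↔ H.LegalSeq η l₁ ∧ H.LegalSeq (H.toppleList η l₁) l₂ := by
  induction l₁ generalizing η with
  | nil => simp [LegalSeq, toppleList]
  | cons v t ih =>
    simp only [List.cons_append, LegalSeq, toppleList, ih]
    tauto

variable {H} in
lemma LegalSeq.ne_sink {η : V → ℕ} {l : List V} (h : H.LegalSeq η l) {v : V} (hv : v ∈ l) :
    v ≠ H.sink := by
  induction l generalizing η with
  | nil => cases hv
  | cons a t ih =>
    rcases List.mem_cons.1 hv with rfl | hv
    exacts [h.1, ih h.2.2 hv]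

variable {H} in
lemma LegalSeq.toppleList_sink {η : V → ℕ} {l : List V} (h : H.LegalSeq η l) :
    H.toppleList η l H.sink = η H.sink := by
  induction l generalizing η with
  | nil => rfl
  | cons a t ih => simp [toppleList, ih h.2.2, topple, Ne.symm h.1]

def laplacian (n : V → ℕ) (x : V) : ℤ := n x * H.deg x - ∑ u, (n u : ℤ) * H.mult u x

lemma laplacian_add (n m : V → ℕ) (x : V) :
    H.laplacian (n + m) x = H.laplacian n x + H.laplacian m x := by
  simp only [laplacian, Pi.add_apply, Nat.cast_add, add_mul, sum_add_distrib]
  ring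

lemma laplacian_mul (s : ℕ) (n : V → ℕ) (x : V) :
    H.laplacian (fun u => s * n u) x = s * H.laplacian n x := by
  simp only [laplacian, Nat.cast_mul, mul_assoc, ← mul_sum]
  ring

lemma laplacian_indicator (S : Finset V) (x : V) :
    H.laplacian (fun u => if u ∈ S then 1 else 0) x =
      (if x ∈ S then (H.deg x : ℤ) else 0) - ∑ u ∈ S, (H.mult u x : ℤ) := by
  simp [laplacian, sum_ite_mem]

lemma topple_apply {v x : V} {η : V → ℕ} (hv : H.deg v ≤ η v) (hx : x ≠ H.sink) :
    (H.topple v η x : ℤ) = η x + H.mult v x - if x = v then (H.deg x : ℤ) else 0 := by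
  by_cases hxv : x = v
  · subst hxv
    simp [topple, H.loopless, Nat.cast_sub hv]
  · simp [topple, hxv, hx]

lemma toppleList_apply {η : V → ℕ} {l : List V} (h : H.LegalSeq η l) {x : V}
    (hx : x ≠ H.sink) :
    (H.toppleList η l x : ℤ) = η x - H.laplacian (fun u => l.count u) x := by
  induction l generalizing η with
  | nil => simp [toppleList, laplacian]
  | cons v t ih =>
    have hcount : (fun u => (v :: t).count u) =
        (fun u => t.count u) + fun u => if u ∈ ({v} : Finset V) then 1 else 0 := by
      funext u
      by_cases huv : u = v <;> simp [huv, Ne.symm]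
    rw [toppleList, ih h.2.2, H.topple_apply h.2.1 hx, hcount, laplacian_add,
      laplacian_indicator, sum_singleton]
    simp only [mem_singleton]
    ring

lemma toppleList_apply_of_nodup {η : V → ℕ} {l : List V} (h : H.LegalSeq η l) (hnd : l.Nodup)
    {x : V} (hx : x ≠ H.sink) :
    (H.toppleList η l x : ℤ) =
      η x + ∑ u ∈ l.toFinset, (H.mult u x : ℤ) - if x ∈ l then (H.deg x : ℤ) else 0 := by
  have hcount : (fun u => l.count u) = fun u => if u ∈ l.toFinset then 1 else 0 := by
    funext u
    simp only [List.mem_toFinset]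
    split_ifs with hu
    exacts [List.count_eq_one_of_mem hnd hu, List.count_eq_zero_of_not_mem hu]
  rw [H.toppleList_apply h hx, hcount, laplacian_indicator]
  simp only [List.mem_toFinset]
  ring

theorem eq_zero_of_laplacian_nonpos {n : V → ℕ} (hsink : n H.sink = 0)
    (hn : ∀ x, x ≠ H.sink → H.laplacian n x ≤ 0) : n = 0 := by
  have : Nonempty V := ⟨H.sink⟩
  obtain ⟨x₀, hx₀⟩ := Finite.exists_max n
  -- maximum principle: the maximum propagates along edges until it reaches the sink
  have spread : ∀ a b, a ≠ H.sink → 0 < H.mult a b → n a = n x₀ → n b = n x₀ := by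
    intro a b ha hab hna
    have hle : ∀ u ∈ (univ : Finset V), (n u : ℤ) * H.mult u a ≤ n x₀ * H.mult u a :=
      fun u _ => mul_le_mul_of_nonneg_right (by exact_mod_cast hx₀ u) (by positivity)
    have heq : ∑ u, (n u : ℤ) * H.mult u a = ∑ u, (n x₀ : ℤ) * H.mult u a := by
      refine le_antisymm (sum_le_sum hle) ?_
      have := hn a ha
      rw [laplacian, hna, H.deg_eq_sum_mult_left, Nat.cast_sum, mul_sum] at this
      linarith
    have hb := (sum_eq_sum_iff_of_le hle).1 heq b (mem_univ b)
    have : (0 : ℤ) < H.mult b a := by rw [H.symm]; exact_mod_cast hab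
    exact_mod_cast mul_right_cancel₀ this.ne' hb
  have hmax : n x₀ = 0 := by
    suffices ∀ x, Relation.ReflTransGen (fun a b => 0 < H.mult a b) x H.sink →
        n x = n x₀ → n x₀ = 0 from this x₀ (H.conn x₀) rfl
    intro x hx
    induction hx using Relation.ReflTransGen.head_induction_on with
    | refl => intro h; rw [← h, hsink]
    | @head a b hab _ ih =>
      intro ha
      by_cases has : a = H.sink
      · rw [← ha, has, hsink]
      · exact ih (spread a b has hab ha)
  funext x
  exact Nat.eq_zero_of_le_zero (hmax ▸ hx₀ x)

variable {H} in
lemma LegalSeq.eq_nil_of_toppleList_eq {η : V → ℕ} {l : List V} (h : H.LegalSeq η l)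
    (hfix : H.toppleList η l = η) : l = [] := by
  have hzero := H.eq_zero_of_laplacian_nonpos (n := fun u => l.count u)
    (List.count_eq_zero.2 fun hs => h.ne_sink hs rfl) fun x hx => by
      have := H.toppleList_apply h hx
      rw [hfix] at this
      omega
  exact List.eq_nil_iff_forall_not_mem.2 fun v hv =>
    (List.count_pos_iff.2 hv).ne' (congrFun hzero v)

lemma topple_sum_le {v : V} {η : V → ℕ} (hv : H.deg v ≤ η v) :
    ∑ y, H.topple v η y ≤ ∑ y, η y := by
  have hpt : ∀ y, H.topple v η y + (if y = v then H.deg v else 0) ≤ η y + H.mult v y := by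
    intro y
    by_cases hyv : y = v
    · subst hyv
      simp only [topple, if_true, H.loopless, add_zero]
      omega
    · by_cases hys : y = H.sink
      · subst hys; simp [topple, hyv]
      · simp [topple, hyv, hys]
  have := sum_le_sum fun y (_ : y ∈ univ) => hpt y
  rw [sum_add_distrib, sum_add_distrib, sum_ite_eq'] at this
  simp only [mem_univ, if_true] at this
  exact Nat.le_of_add_le_add_right this

variable {H} in
lemma LegalSeq.toppleList_le_sum {η : V → ℕ} {l : List V} (h : H.LegalSeq η l) (x : V) :
    H.toppleList η l x ≤ ∑ y, η y := by
  induction l generalizing η with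
  | nil => exact single_le_sum (fun y _ => Nat.zero_le (η y)) (mem_univ x)
  | cons v t ih => exact (ih h.2.2).trans (H.topple_sum_le h.2.1)

variable {H} in
/-- The prefixes of a legal sequence lead to pairwise distinct configurations, all bounded by
the initial number of grains. -/
lemma LegalSeq.length_lt {η : V → ℕ} {l : List V} (h : H.LegalSeq η l) :
    l.length < (Icc 0 fun _ => ∑ y, η y : Finset (V → ℕ)).card := by
  have hprefix : ∀ i, H.LegalSeq η (l.take i) := fun i =>
    (H.legalSeq_append.1 (by rwa [List.take_append_drop])).1
  have hmem : ∀ i ∈ range (l.length + 1),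
      H.toppleList η (l.take i) ∈ (Icc 0 fun _ => ∑ y, η y : Finset (V → ℕ)) :=
    fun i _ => mem_Icc.2 ⟨fun _ => Nat.zero_le _, (hprefix i).toppleList_le_sum⟩
  have hinj : ∀ i j, i < j → j ≤ l.length →
      H.toppleList η (l.take i) ≠ H.toppleList η (l.take j) := by
    intro i j hij hj heq
    have hsplit : l.take j = l.take i ++ (l.take j).drop i := by
      have := List.take_append_drop i (l.take j)
      rwa [List.take_take, min_eq_left hij.le, eq_comm] at this
    have hmid := (H.legalSeq_append.1 (hsplit ▸ hprefix j)).2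
    have hnil := hmid.eq_nil_of_toppleList_eq (by rw [← H.toppleList_append, ← hsplit, heq])
    have := congrArg List.length hnil
    simp only [List.length_drop, List.length_take, List.length_nil] at this
    omega
  have := card_le_card_of_injOn _ hmem fun i hi j hj hij => by
    simp only [coe_range, Set.mem_Iio] at hi hj
    rcases lt_trichotomy i j with hlt | rfl | hgt
    exacts [absurd hij (hinj i j hlt (by omega)), rfl, absurd hij.symm (hinj j i hgt (by omega))]
  rw [card_range] at this
  omega

lemma exists_legalSeq_stable (η : V → ℕ) :
    ∃ l, H.LegalSeq η l ∧ H.Stable (H.toppleList η l) := by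
  refine exists_of_extend_of_length_le _ (fun l hl => hl.length_lt.le)
    (fun l hl hst => ?_) (l := []) trivial
  obtain ⟨v, hv, hdeg⟩ := by simpa [Stable] using hst
  exact ⟨v, H.legalSeq_append.2 ⟨hl, hv, hdeg, trivial⟩⟩

lemma exists_laplacian_pos :
    ∃ n : V → ℕ, n H.sink = 0 ∧ ∀ x, x ≠ H.sink → 1 ≤ H.laplacian n x := by
  obtain ⟨l, hl, hst⟩ := H.exists_legalSeq_stable fun x => if x = H.sink then 0 else H.deg x
  refine ⟨fun u => l.count u, List.count_eq_zero.2 fun hs => hl.ne_sink hs rfl, ?_⟩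
  intro x hx
  have := H.toppleList_apply hl hx
  have := hst x hx
  simp only [hx, if_false] at *
  omega

/-! ### Dhar's burning criterion -/

/-- `η` contains no forbidden subconfiguration. -/
def Allowed (η : V → ℕ) : Prop :=
  ∀ S : Finset V, S.Nonempty → H.sink ∉ S → ∃ v ∈ S, ∑ u ∈ S.erase v, H.mult u v ≤ η v

lemma exists_mem_sum_erase_lt_deg {S : Finset V} (hS : S.Nonempty) (hs : H.sink ∉ S) :
    ∃ v ∈ S, ∑ u ∈ S.erase v, H.mult u v < H.deg v := by
  obtain ⟨x, hx⟩ := hS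
  have hexit : ∃ v ∈ S, ∃ z ∉ S, 0 < H.mult v z := by
    induction H.conn x using Relation.ReflTransGen.head_induction_on with
    | refl => exact absurd hx hs
    | @head a b hab _ ih =>
      by_cases hb : b ∈ S
      · exact ih hb
      · exact ⟨a, hx, b, hb, hab⟩
  obtain ⟨v, hv, z, hz, hzv⟩ := hexit
  exact ⟨v, hv, (H.sum_mult_lt_deg_iff _ v).2 ⟨z, fun h => hz (mem_of_mem_erase h), hzv⟩⟩

lemma allowed_of_deg_le {η : V → ℕ} (h : ∀ v, v ≠ H.sink → H.deg v ≤ η v) : H.Allowed η := by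
  intro S hS hs
  obtain ⟨v, hv, hlt⟩ := H.exists_mem_sum_erase_lt_deg hS hs
  exact ⟨v, hv, hlt.le.trans (h v fun h' => hs (h' ▸ hv))⟩

variable {H}

lemma Allowed.mono {η η' : V → ℕ} (h : H.Allowed η) (hle : η ≤ η') : H.Allowed η' := by
  intro S hS hs
  obtain ⟨v, hv, hv'⟩ := h S hS hs
  exact ⟨v, hv, hv'.trans (hle v)⟩

lemma Allowed.topple {η : V → ℕ} (h : H.Allowed η) (x : V) : H.Allowed (H.topple x η) := by
  intro S hS hs
  by_cases hne : (S.erase x).Nonempty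
  · obtain ⟨v, hv, hle⟩ := h _ hne fun h' => hs (mem_of_mem_erase h')
    have hvx : v ≠ x := ne_of_mem_erase hv
    have hvs : v ≠ H.sink := fun h' => hs (h' ▸ mem_of_mem_erase hv)
    refine ⟨v, mem_of_mem_erase hv, ?_⟩
    have hsub : S.erase v ⊆ insert x ((S.erase x).erase v) := by
      intro u hu
      by_cases hux : u = x
      · exact hux ▸ mem_insert_self _ _
      · exact mem_insert_of_mem (by simp_all)
    calc ∑ u ∈ S.erase v, H.mult u v
        ≤ ∑ u ∈ insert x ((S.erase x).erase v), H.mult u v := sum_le_sum_of_subset hsub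
      _ = H.mult x v + ∑ u ∈ (S.erase x).erase v, H.mult u v := sum_insert (by simp)
      _ ≤ H.topple x η v := by simp only [SandpileGraph.topple, hvx, hvs, if_false]; omega
  · have hS' : S = {x} := by
      have hsub : S ⊆ {x} := fun u hu => mem_singleton.2 <| by
        by_contra hux
        exact hne ⟨u, mem_erase.2 ⟨hux, hu⟩⟩
      exact (subset_singleton_iff.1 hsub).resolve_left hS.ne_empty
    exact ⟨x, by simp [hS'], by simp [hS']⟩

lemma Allowed.toppleList {η : V → ℕ} (h : H.Allowed η) (l : List V) :
    H.Allowed (H.toppleList η l) := by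
  induction l generalizing η with
  | nil => exact h
  | cons v t ih => exact ih (h.topple v)

lemma Recurrent.allowed {η : V → ℕ} (h : H.Recurrent η) : H.Allowed η := by
  obtain ⟨m, -, l, -, rfl, -⟩ := h.2.2 (fun v => if v = H.sink then 0 else H.deg v) (by simp)
  refine (H.allowed_of_deg_le fun v hv => ?_).toppleList l
  simp [hv]

variable (H)

lemma laplacian_min_nonneg {n : V → ℕ} (hn : ∀ x, x ≠ H.sink → 0 ≤ H.laplacian n x) (r : ℕ)
    (x : V) (hx : x ≠ H.sink) : 0 ≤ H.laplacian (fun u => min (n u) r) x := by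
  have hdeg : (H.deg x : ℤ) = ∑ u, (H.mult u x : ℤ) := by
    exact_mod_cast H.deg_eq_sum_mult_left x
  rcases le_total (n x) r with hle | hle
  · have : ∑ u, ((min (n u) r : ℕ) : ℤ) * H.mult u x ≤ ∑ u, (n u : ℤ) * H.mult u x :=
      sum_le_sum fun u _ => by gcongr; exact min_le_left _ _
    have := hn x hx
    simp only [laplacian, min_eq_left hle] at *
    linarith
  · have : ∑ u, ((min (n u) r : ℕ) : ℤ) * H.mult u x ≤ ∑ u, (r : ℤ) * H.mult u x :=
      sum_le_sum fun u _ => by gcongr; exact min_le_right _ _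
    rw [← mul_sum, ← hdeg] at this
    simp only [laplacian, min_eq_right hle]
    linarith

lemma exists_add_laplacian (ν : V → ℕ) {n : V → ℕ} (hn : ∀ x, x ≠ H.sink → 0 ≤ H.laplacian n x) :
    ∃ ζ : V → ℕ, ζ H.sink = ν H.sink ∧ ν ≤ ζ ∧
      ∀ x, x ≠ H.sink → (ζ x : ℤ) = ν x + H.laplacian n x := by
  refine ⟨fun x => if x = H.sink then ν x else ν x + (H.laplacian n x).toNat, by simp,
    fun x => ?_, fun x hx => ?_⟩
  · dsimp only
    split_ifs <;> omega
  · simp only [hx, if_false, Nat.cast_add, Int.toNat_of_nonneg (hn x hx)]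

/-- The allowed condition of `χ` on the not yet toppled part of `S` names the next vertex to
topple. -/
lemma exists_legalSeq_of_allowed {χ : V → ℕ} (hχ : H.Allowed χ) (S : Finset V)
    (hS : H.sink ∉ S) {ζ : V → ℕ} (hsink : ζ H.sink = χ H.sink)
    (hζ : ∀ x, x ≠ H.sink →
      (ζ x : ℤ) = χ x + H.laplacian (fun u => if u ∈ S then 1 else 0) x) :
    ∃ l, H.LegalSeq ζ l ∧ H.toppleList ζ l = χ := by
  induction S using strongInduction generalizing ζ with
  | H S ih =>
    simp only [laplacian_indicator] at hζ
    rcases S.eq_empty_or_nonempty with rfl | hne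
    · refine ⟨[], trivial, funext fun x => ?_⟩
      by_cases hx : x = H.sink
      · exact hx ▸ hsink
      · simpa [toppleList] using hζ x hx
    obtain ⟨v, hv, hvχ⟩ := hχ S hne hS
    have hvs : v ≠ H.sink := fun h => hS (h ▸ hv)
    have hsplit : ∀ x, ∑ u ∈ S, (H.mult u x : ℤ) = H.mult v x + ∑ u ∈ S.erase v, (H.mult u x : ℤ) :=
      fun x => (add_sum_erase S _ hv).symm
    have hvζ : H.deg v ≤ ζ v := by
      have := hζ v hvs
      rw [if_pos hv, hsplit, H.loopless] at this
      have : ∑ u ∈ S.erase v, (H.mult u v : ℤ) ≤ χ v := by exact_mod_cast hvχ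
      omega
    obtain ⟨l, hl, hres⟩ := ih (S.erase v) (erase_ssubset hv) (fun h => hS (mem_of_mem_erase h))
      (ζ := H.topple v ζ) (by simp [topple, Ne.symm hvs, hsink]) fun x hx => by
        rw [laplacian_indicator, H.topple_apply hvζ hx, hζ x hx, hsplit]
        by_cases hxv : x = v
        · subst hxv
          simp only [hv, if_true, notMem_erase, if_false]
          ring
        · simp only [mem_erase, hxv, ne_eq, not_false_eq_true, true_and, if_false]
          ring
    exact ⟨v :: l, ⟨hvs, hvζ, hl⟩, hres⟩

/-- Topple the layers `{u | r < n u}` for `r = max n - 1, …, 0`; superharmonicity of `n` keeps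
every intermediate configuration `ν + laplacian (min n r)` above `ν`, hence allowed. -/
lemma exists_legalSeq_of_laplacian_nonneg {ν : V → ℕ} (hν : H.Allowed ν) {n : V → ℕ}
    (hn0 : n H.sink = 0) (hn : ∀ x, x ≠ H.sink → 0 ≤ H.laplacian n x) {ζ : V → ℕ}
    (hsink : ζ H.sink = ν H.sink) (hζ : ∀ x, x ≠ H.sink → (ζ x : ℤ) = ν x + H.laplacian n x) :
    ∃ l, H.LegalSeq ζ l ∧ H.toppleList ζ l = ν := by
  suffices ∀ r ζ, ζ H.sink = ν H.sink →
      (∀ x, x ≠ H.sink → (ζ x : ℤ) = ν x + H.laplacian (fun u => min (n u) r) x) →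
      ∃ l, H.LegalSeq ζ l ∧ H.toppleList ζ l = ν by
    have hmax : (fun u => min (n u) (univ.sup n)) = n :=
      funext fun u => min_eq_left (le_sup (f := n) (mem_univ u))
    exact this (univ.sup n) ζ hsink (by rwa [hmax])
  intro r
  induction r with
  | zero =>
    intro ζ hsink hζ
    refine ⟨[], trivial, funext fun x => ?_⟩
    by_cases hx : x = H.sink
    · exact hx ▸ hsink
    · simpa [toppleList, laplacian] using hζ x hx
  | succ r ih =>
    intro ζ hsink hζ
    obtain ⟨χ, hχs, hνχ, hχ⟩ := H.exists_add_laplacian ν (H.laplacian_min_nonneg hn r)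
    obtain ⟨l₁, hl₁, hres₁⟩ := H.exists_legalSeq_of_allowed (hν.mono hνχ) {u | r < n u}
      (by simp [hn0]) (hsink.trans hχs.symm) fun x hx => by
        have hmin : (fun u => min (n u) (r + 1)) =
            (fun u => min (n u) r) + fun u => if u ∈ ({u | r < n u} : Finset V) then 1 else 0 := by
          funext u
          simp only [Pi.add_apply, mem_filter, mem_univ, true_and]
          split_ifs <;> omega
        rw [hζ x hx, hmin, laplacian_add, hχ x hx]
        ring
    obtain ⟨l₀, hl₀, hres₀⟩ := ih χ hχs hχ
    refine ⟨l₁ ++ l₀, H.legalSeq_append.2 ⟨hl₁, hres₁ ▸ hl₀⟩, ?_⟩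
    rw [H.toppleList_append, hres₁, hres₀]

/-- Dhar's burning criterion, the hard direction. -/
theorem recurrent_of_allowed {ν : V → ℕ} (h0 : ν H.sink = 0) (hst : H.Stable ν)
    (hν : H.Allowed ν) : H.Recurrent ν := by
  refine ⟨h0, hst, fun ξ hξ => ?_⟩
  obtain ⟨n, hn0, hn⟩ := H.exists_laplacian_pos
  set s := univ.sup ξ
  have hsn : ∀ x, x ≠ H.sink → (ξ x : ℤ) ≤ H.laplacian (fun u => s * n u) x := fun x hx => by
    rw [laplacian_mul]
    have : (ξ x : ℤ) ≤ s := by exact_mod_cast le_sup (f := ξ) (mem_univ x)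
    nlinarith [hn x hx]
  have hn' : ∀ x, x ≠ H.sink → 0 ≤ H.laplacian (fun u => s * n u) x :=
    fun x hx => (Nat.cast_nonneg _).trans (hsn x hx)
  obtain ⟨ζ, hζs, -, hζ⟩ := H.exists_add_laplacian ν hn'
  have hξζ : ξ + (ζ - ξ) = ζ := by
    funext x
    suffices ξ x ≤ ζ x by simp only [Pi.add_apply, Pi.sub_apply]; omega
    by_cases hx : x = H.sink
    · simp [hx, hξ]
    · have := hζ x hx
      have := hsn x hx
      omega
  obtain ⟨l, hl, hres⟩ := H.exists_legalSeq_of_laplacian_nonneg hν (n := fun u => s * n u)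
    (by simp [hn0]) hn' hζs hζ
  refine ⟨ζ - ξ, by simp [hζs, hξ, h0], l, ?_⟩
  rw [hξζ, hres]
  exact ⟨hl, rfl, hst⟩

/-! ### Waves -/

/-- The configurations making up `R_{H'} \ R_H`, see
`IsAddSinkEdge.recurrent_and_not_recurrent_iff`. -/
def IsWaveStart (w : V) (η : V → ℕ) : Prop :=
  H.Allowed η ∧ η H.sink = 0 ∧ (∀ v, v ≠ H.sink → v ≠ w → η v < H.deg v) ∧ η w = H.deg w

variable {H} {w : V} {η η' : V → ℕ} {l l' : List V}

lemma IsWaveStart.exists_isWaveList (h : H.IsWaveStart w η) (hw : w ≠ H.sink) :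
    ∃ l, H.IsWaveList w η l := by
  have hext : ∀ l, l.Nodup ∧ w ∈ l ∧ H.LegalSeq η l →
      ¬ (∀ v, v ≠ H.sink → v ≠ w → H.toppleList η l v < H.deg v) →
      ∃ v, (l ++ [v]).Nodup ∧ w ∈ l ++ [v] ∧ H.LegalSeq η (l ++ [v]) := by
    rintro l ⟨hnd, hwl, hl⟩ hst
    obtain ⟨v, hvs, hvw, hv⟩ : ∃ v, v ≠ H.sink ∧ v ≠ w ∧ H.deg v ≤ H.toppleList η l v := by
      simpa using hst
    have hvl : v ∉ l := fun hvl => by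
      have := H.toppleList_apply_of_nodup hl hnd hvs
      have : ∑ u ∈ l.toFinset, (H.mult u v : ℤ) ≤ H.deg v := by
        exact_mod_cast H.sum_mult_le_deg l.toFinset v
      have := h.2.2.1 v hvs hvw
      simp only [hvl, if_true] at *
      omega
    exact ⟨v, hnd.append (List.nodup_singleton v) (by simpa using hvl),
      List.mem_append_left _ hwl, H.legalSeq_append.2 ⟨hl, hvs, hv, trivial⟩⟩
  obtain ⟨l, ⟨hnd, hwl, hl⟩, hst⟩ := exists_of_extend_of_length_le (Fintype.card V)
    (fun l hl => hl.1.length_le_card) hext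
    ⟨List.nodup_singleton w, List.mem_singleton_self w, hw, h.2.2.2.ge, trivial⟩
  exact ⟨l, hnd, hwl, hl, hst⟩

lemma IsWaveList.toppleList_self (hl : H.IsWaveList w η l) (hw : w ≠ H.sink)
    (hηw : η w = H.deg w) : H.toppleList η l w = ∑ u ∈ l.toFinset, H.mult u w := by
  have := H.toppleList_apply_of_nodup hl.2.2.1 hl.1 hw
  rw [if_pos hl.2.1, hηw, add_sub_cancel_left] at this
  exact_mod_cast this

lemma IsWaveList.toppleList_self_lt_deg_iff (hl : H.IsWaveList w η l) (hw : w ≠ H.sink)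
    (hηw : η w = H.deg w) :
    H.toppleList η l w < H.deg w ↔ ∃ y, 0 < H.mult w y ∧ y ∉ l := by
  simp [hl.toppleList_self hw hηw, H.sum_mult_lt_deg_iff, and_comm]

/-- A vertex `v ∈ W(η) \ W(η')` picked by the allowed condition of `η'` on `W(η) \ W(η')` would
end with fewer grains after the first wave than after the second. -/
lemma IsWaveList.toFinset_subset (hl : H.IsWaveList w η l) (hl' : H.IsWaveList w η' l')
    (h : H.IsWaveStart w η) (h' : H.IsWaveStart w η')
    (heq : H.toppleList η l = H.toppleList η' l') : l.toFinset ⊆ l'.toFinset := by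
  by_contra hsub
  set S := l.toFinset \ l'.toFinset
  have hSs : H.sink ∉ S := fun hs => hl.2.2.1.ne_sink (List.mem_toFinset.1 (mem_sdiff.1 hs).1) rfl
  obtain ⟨v, hvS, hvη'⟩ := h'.1 S (sdiff_nonempty.2 hsub) hSs
  obtain ⟨hvl, hvl'⟩ := mem_sdiff.1 hvS
  rw [List.mem_toFinset] at hvl hvl'
  have hvs : v ≠ H.sink := fun hs => hSs (hs ▸ hvS)
  have hvw : v ≠ w := fun hvw => hvl' (hvw ▸ hl'.2.1)
  have hval := H.toppleList_apply_of_nodup hl.2.2.1 hl.1 hvs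
  have hval' := H.toppleList_apply_of_nodup hl'.2.2.1 hl'.1 hvs
  rw [if_pos hvl] at hval
  rw [if_neg hvl', ← heq] at hval'
  have hsum : ∑ u ∈ l.toFinset, H.mult u v ≤ ∑ u ∈ S.erase v, H.mult u v +
      ∑ u ∈ l'.toFinset, H.mult u v := by
    rw [H.sum_erase_mult, ← sum_union (disjoint_sdiff_self_left), sdiff_union_self_eq_union]
    exact sum_le_sum_of_subset subset_union_left
  have := h.2.2.1 v hvs hvw
  have : (∑ u ∈ l.toFinset, (H.mult u v : ℤ)) ≤ ∑ u ∈ S.erase v, (H.mult u v : ℤ) +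
      ∑ u ∈ l'.toFinset, (H.mult u v : ℤ) := by exact_mod_cast hsum
  have : (∑ u ∈ S.erase v, (H.mult u v : ℤ)) ≤ η' v := by exact_mod_cast hvη'
  omega

lemma IsWaveList.eq_of_toppleList_eq (hl : H.IsWaveList w η l) (hl' : H.IsWaveList w η' l')
    (h : H.IsWaveStart w η) (h' : H.IsWaveStart w η')
    (heq : H.toppleList η l = H.toppleList η' l') : η = η' := by
  have hS : l.toFinset = l'.toFinset :=
    (hl.toFinset_subset hl' h h' heq).antisymm (hl'.toFinset_subset hl h' h heq.symm)
  funext x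
  by_cases hx : x = H.sink
  · rw [hx, h.2.1, h'.2.1]
  · have hval := H.toppleList_apply_of_nodup hl.2.2.1 hl.1 hx
    have hval' := H.toppleList_apply_of_nodup hl'.2.2.1 hl'.1 hx
    have hmem : x ∈ l ↔ x ∈ l' := by rw [← List.mem_toFinset, hS, List.mem_toFinset]
    rw [heq, hval', hS] at hval
    simp only [hmem] at hval
    omega

lemma IsWaveList.not_allowed_update (hl : H.IsWaveList w η l) (hw : w ≠ H.sink)
    (h : H.IsWaveStart w η) (hfull : ∀ y, 0 < H.mult w y → y ∈ l) {k : ℕ} (hk : k < H.deg w) :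
    ¬ H.Allowed (Function.update (H.toppleList η l) w k) := by
  intro hA
  have hSs : H.sink ∉ l.toFinset := fun hs => hl.2.2.1.ne_sink (List.mem_toFinset.1 hs) rfl
  obtain ⟨v, hv, hle⟩ := hA l.toFinset ⟨w, List.mem_toFinset.2 hl.2.1⟩ hSs
  rw [H.sum_erase_mult] at hle
  by_cases hvw : v = w
  · subst hvw
    have := (hl.toppleList_self_lt_deg_iff hw h.2.2.2).not.2 (by simpa using hfull)
    rw [hl.toppleList_self hw h.2.2.2] at this
    simp only [Function.update_self] at hle
    omega
  · have hvs : v ≠ H.sink := fun hs => hSs (hs ▸ hv)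
    have hval := H.toppleList_apply_of_nodup hl.2.2.1 hl.1 hvs
    rw [if_pos (List.mem_toFinset.1 hv)] at hval
    have := h.2.2.1 v hvs hvw
    rw [Function.update_of_ne hvw] at hle
    have : ∑ u ∈ l.toFinset, (H.mult u v : ℤ) ≤ H.toppleList η l v := by exact_mod_cast hle
    omega

variable (H) in
open Classical in
/-- A wave list from `η`, chosen to miss a neighbour of `w` whenever some wave from `η` does. -/
noncomputable def waveList (w : V) (η : V → ℕ) : List V :=
  if h : H.IsLastWaveCfg w η then h.choose
  else if h : ∃ l, H.IsWaveList w η l then h.choose else []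

variable (H) in
noncomputable def wave (w : V) (η : V → ℕ) : V → ℕ := H.toppleList η (H.waveList w η)

lemma IsWaveStart.isWaveList_waveList (h : H.IsWaveStart w η) (hw : w ≠ H.sink) :
    H.IsWaveList w η (H.waveList w η) := by
  unfold waveList
  split_ifs with hlast hex
  · exact hlast.choose_spec.1
  · exact hex.choose_spec
  · exact absurd (h.exists_isWaveList hw) hex

lemma IsWaveStart.wave_self_lt_deg_iff (h : H.IsWaveStart w η) (hw : w ≠ H.sink) :
    H.wave w η w < H.deg w ↔ H.IsLastWaveCfg w η := by
  have hl := h.isWaveList_waveList hw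
  rw [wave, hl.toppleList_self_lt_deg_iff hw h.2.2.2]
  refine ⟨fun hy => ⟨_, hl, hy⟩, fun hlast => ?_⟩
  simpa only [waveList, dif_pos hlast] using hlast.choose_spec.2

lemma IsWaveStart.isWaveStart_wave (h : H.IsWaveStart w η) (hw : w ≠ H.sink)
    (hlast : ¬ H.IsLastWaveCfg w η) : H.IsWaveStart w (H.wave w η) := by
  have hl := h.isWaveList_waveList hw
  refine ⟨h.1.toppleList _, hl.2.2.1.toppleList_sink.trans h.2.1, hl.2.2.2, ?_⟩
  have := (h.wave_self_lt_deg_iff hw).not.2 hlast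
  have := H.sum_mult_le_deg (H.waveList w η).toFinset w
  rw [wave, hl.toppleList_self hw h.2.2.2] at *
  omega

lemma IsWaveStart.recurrent_wave (h : H.IsWaveStart w η) (hw : w ≠ H.sink)
    (hlast : H.IsLastWaveCfg w η) : H.Recurrent (H.wave w η) := by
  have hl := h.isWaveList_waveList hw
  refine H.recurrent_of_allowed (hl.2.2.1.toppleList_sink.trans h.2.1) (fun v hv => ?_)
    (h.1.toppleList _)
  by_cases hvw : v = w
  · exact hvw ▸ (h.wave_self_lt_deg_iff hw).2 hlast
  · exact hl.2.2.2 v hv hvw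

lemma injOn_wave (hw : w ≠ H.sink) : Set.InjOn (H.wave w) {η | H.IsWaveStart w η} :=
  fun _ h _ h' heq => (h.isWaveList_waveList hw).eq_of_toppleList_eq
    (h'.isWaveList_waveList hw) h h' heq

lemma Recurrent.isWaveStart_update {ζ : V → ℕ} (h : H.Recurrent ζ) (hw : w ≠ H.sink) :
    H.IsWaveStart w (Function.update ζ w (H.deg w)) := by
  refine ⟨h.allowed.mono fun v => ?_, by simp [Ne.symm hw, h.1], fun v hv hvw => ?_, by simp⟩
  · by_cases hvw : v = w
    · subst hvw; simpa using (h.2.1 v hw).le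
    · simp [hvw]
  · simpa [hvw] using h.2.1 v hv

lemma Recurrent.update_notMem_image_wave {ζ : V → ℕ} (h : H.Recurrent ζ) (hw : w ≠ H.sink) :
    Function.update ζ w (H.deg w) ∉
      H.wave w '' {η | H.IsWaveStart w η ∧ ¬ H.IsLastWaveCfg w η} := by
  rintro ⟨η, ⟨hη, hlast⟩, heq⟩
  have hl := hη.isWaveList_waveList hw
  have hζ : ζ = Function.update (H.wave w η) w (ζ w) := by
    rw [heq, Function.update_idem, Function.update_eq_self]
  refine hl.not_allowed_update hw hη (fun y hy => ?_) (h.2.1 w hw) (hζ ▸ h.allowed)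
  by_contra hyl
  exact hlast ⟨_, hl, y, hy, hyl⟩

/-! ### Counting last waves -/

lemma finite_of_forall_le_deg {s : Set (V → ℕ)} (h : ∀ η ∈ s, ∀ v, η v ≤ H.deg v) : s.Finite :=
  (Set.finite_Icc 0 H.deg).subset fun η hη => ⟨fun _ => Nat.zero_le _, h η hη⟩

lemma Recurrent.le_deg (h : H.Recurrent η) (v : V) : η v ≤ H.deg v := by
  by_cases hv : v = H.sink
  · simp [hv, h.1]
  · exact (h.2.1 v hv).le

lemma IsWaveStart.le_deg (h : H.IsWaveStart w η) (v : V) : η v ≤ H.deg v := by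
  by_cases hv : v = H.sink
  · simp [hv, h.2.1]
  by_cases hvw : v = w
  · exact hvw ▸ h.2.2.2.le
  · exact (h.2.2.1 v hv hvw).le

lemma Recurrent.isWaveStart_iterate_wave {ζ : V → ℕ} (h : H.Recurrent ζ) (hw : w ≠ H.sink)
    {k : ℕ} (hk : ∀ j < k, (H.wave w)^[j] (Function.update ζ w (H.deg w)) ∈
      {η | H.IsWaveStart w η ∧ ¬ H.IsLastWaveCfg w η}) :
    H.IsWaveStart w ((H.wave w)^[k] (Function.update ζ w (H.deg w))) := by
  cases k with
  | zero => exact h.isWaveStart_update hw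
  | succ j =>
    rw [Function.iterate_succ_apply']
    exact (hk j j.lt_succ_self).1.isWaveStart_wave hw (hk j j.lt_succ_self).2

theorem ncard_lastWave_le_ncard_recurrent (hw : w ≠ H.sink) :
    {η | H.IsWaveStart w η ∧ H.IsLastWaveCfg w η}.ncard ≤ {η | H.Recurrent η}.ncard :=
  Set.ncard_le_ncard_of_injOn (H.wave w) (fun _ h => h.1.recurrent_wave hw h.2)
    ((injOn_wave hw).mono fun _ h => h.1) (finite_of_forall_le_deg fun _ h => h.le_deg)

/-- Starting from `ζ ∈ R_H` with `deg w` grains put on `w`, run waves until the first last wave;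
the resulting last wave together with `ζ w` determines `ζ`. -/
theorem ncard_recurrent_le_deg_mul (hw : w ≠ H.sink) :
    {η | H.Recurrent η}.ncard ≤ H.deg w * {η | H.IsWaveStart w η ∧ H.IsLastWaveCfg w η}.ncard := by
  set D := {η | H.IsWaveStart w η ∧ ¬ H.IsLastWaveCfg w η}
  have hinj : Set.InjOn (H.wave w) D := (injOn_wave hw).mono fun _ h => h.1
  have hexit : ∀ ζ ∈ {η | H.Recurrent η}, ∃ k,
      (∀ j < k, (H.wave w)^[j] (Function.update ζ w (H.deg w)) ∈ D) ∧
        (H.wave w)^[k] (Function.update ζ w (H.deg w)) ∉ D := fun ζ hζ =>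
    hinj.exists_iterate_notMem (finite_of_forall_le_deg fun _ h => h.1.le_deg)
      (hζ.update_notMem_image_wave hw)
  choose! k hk using hexit
  have hmaps : ∀ ζ ∈ {η | H.Recurrent η},
      ((H.wave w)^[k ζ] (Function.update ζ w (H.deg w)), ζ w) ∈
        {η | H.IsWaveStart w η ∧ H.IsLastWaveCfg w η} ×ˢ Set.Iio (H.deg w) := by
    intro ζ hζ
    have hstart := hζ.isWaveStart_iterate_wave hw (hk ζ hζ).1
    exact ⟨⟨hstart, not_not.1 fun h => (hk ζ hζ).2 ⟨hstart, h⟩⟩, hζ.2.1 w hw⟩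
  have hinjOn : Set.InjOn (fun ζ => ((H.wave w)^[k ζ] (Function.update ζ w (H.deg w)), ζ w))
      {η | H.Recurrent η} := by
    intro ζ hζ ζ' hζ' heq
    obtain ⟨hiter, hw'⟩ := Prod.mk.inj heq
    have := (hinj.eq_of_iterate_eq (hζ.update_notMem_image_wave hw)
      (hζ'.update_notMem_image_wave hw) (hk ζ hζ).1 (hk ζ' hζ').1 hiter).1
    funext v
    by_cases hvw : v = w
    · exact hvw ▸ hw'
    · simpa [hvw] using congrFun this v
  calc {η | H.Recurrent η}.ncard
      ≤ ({η | H.IsWaveStart w η ∧ H.IsLastWaveCfg w η} ×ˢ Set.Iio (H.deg w)).ncard :=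
        Set.ncard_le_ncard_of_injOn _ hmaps hinjOn
          ((finite_of_forall_le_deg fun _ h => h.1.le_deg).prod (Set.finite_Iio _))
    _ = H.deg w * {η | H.IsWaveStart w η ∧ H.IsLastWaveCfg w η}.ncard := by
        rw [Set.ncard_prod, Set.ncard_Iio_nat, mul_comm]

/-! ### Adding an edge from `w` to the sink -/

def IsAddSinkEdge (H H' : SandpileGraph V) (w : V) : Prop :=
  H'.sink = H.sink ∧ ∀ x y, H'.mult x y = H.mult x y +
    (if (x = w ∧ y = H.sink) ∨ (x = H.sink ∧ y = w) then 1 else 0)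

variable {H' : SandpileGraph V}

lemma IsAddSinkEdge.mult_eq (hE : H.IsAddSinkEdge H' w) {u v : V} (hu : u ≠ H.sink)
    (hv : v ≠ H.sink) : H'.mult u v = H.mult u v := by
  simp [hE.2, hu, hv]

lemma IsAddSinkEdge.deg_eq (hE : H.IsAddSinkEdge H' w) {v : V} (hv : v ≠ H.sink) :
    H'.deg v = H.deg v + if v = w then 1 else 0 := by
  by_cases hvw : v = w
  · subst hvw
    simp [deg, hE.2, hv, sum_add_distrib]
  · simp [deg, hE.2, hv, hvw]

lemma IsAddSinkEdge.allowed_iff (hE : H.IsAddSinkEdge H' w) {η : V → ℕ} :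
    H'.Allowed η ↔ H.Allowed η := by
  unfold Allowed
  rw [hE.1]
  refine forall₃_congr fun S _ hS => exists_congr fun v => and_congr_right fun hv => ?_
  rw [sum_congr rfl fun u hu => hE.mult_eq (fun h => hS (h ▸ mem_of_mem_erase hu))
    (fun h => hS (h ▸ hv))]

lemma IsAddSinkEdge.recurrent_and_not_recurrent_iff (hE : H.IsAddSinkEdge H' w)
    (hw : w ≠ H.sink) {η : V → ℕ} :
    H'.Recurrent η ∧ ¬ H.Recurrent η ↔ H.IsWaveStart w η := by
  constructor
  · rintro ⟨hR', hR⟩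
    have h0 : η H.sink = 0 := hE.1 ▸ hR'.1
    have hA := hE.allowed_iff.1 hR'.allowed
    have hlt : ∀ v, v ≠ H.sink → η v < H.deg v + if v = w then 1 else 0 := fun v hv =>
      hE.deg_eq hv ▸ hR'.2.1 v (hE.1 ▸ hv)
    refine ⟨hA, h0, fun v hv hvw => by simpa [hvw] using hlt v hv, ?_⟩
    refine le_antisymm (by simpa using hlt w hw) (not_lt.1 fun hw' => hR ?_)
    refine H.recurrent_of_allowed h0 (fun v hv => ?_) hA
    by_cases hvw : v = w
    · exact hvw ▸ hw'
    · simpa [hvw] using hlt v hv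
  · intro h
    refine ⟨H'.recurrent_of_allowed (hE.1 ▸ h.2.1) (fun v hv => ?_) (hE.allowed_iff.2 h.1),
      fun hR => (hR.2.1 w hw).ne h.2.2.2⟩
    rw [hE.1] at hv
    rw [hE.deg_eq hv]
    by_cases hvw : v = w
    · simp [hvw, h.2.2.2]
    · simpa [hvw] using h.2.2.1 v hv hvw

end SandpileGraph

open SandpileGraph in
/-- **Counting last waves.**  With `H'` obtained from `H` by adding one extra edge from `w`
to the sink, the number of configurations in `R_{H'} \ R_H` that are last waves is at least
`|R_H| / deg_H(w)` and at most `|R_H|`. -/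
theorem card_last_waves {V : Type*} [Fintype V] [DecidableEq V]
    (H H' : SandpileGraph V) (w : V) (hw : w ≠ H.sink)
    (hsink : H'.sink = H.sink)
    (hmult : ∀ x y, H'.mult x y = H.mult x y +
      (if (x = w ∧ y = H.sink) ∨ (x = H.sink ∧ y = w) then 1 else 0)) :
    {η : V → ℕ | H.Recurrent η}.ncard ≤
        H.deg w *
          {η : V → ℕ | H'.Recurrent η ∧ ¬ H.Recurrent η ∧ H.IsLastWaveCfg w η}.ncard ∧
      {η : V → ℕ | H'.Recurrent η ∧ ¬ H.Recurrent η ∧ H.IsLastWaveCfg w η}.ncard ≤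
        {η : V → ℕ | H.Recurrent η}.ncard := by
  have hE : H.IsAddSinkEdge H' w := ⟨hsink, hmult⟩
  have hlast : {η | H'.Recurrent η ∧ ¬ H.Recurrent η ∧ H.IsLastWaveCfg w η} =
      {η | H.IsWaveStart w η ∧ H.IsLastWaveCfg w η} := by
    ext η
    exact and_assoc.symm.trans (and_congr_left' (hE.recurrent_and_not_recurrent_iff hw))
  rw [hlast]
  exact ⟨ncard_recurrent_le_deg_mul hw, ncard_lastWave_le_ncard_recurrent hw⟩
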